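/- Let s ≥ 1 and let w₁, …, w_N be lists of Booleans, each containing no contiguous substring equal to replicate s false (no run of s zeros). Let z be the concatenation of the blocks (1·0^s) ++ w₁, (1·0^s) ++ w₂, …, (1·0^s) ++ w_N. Then the set of positions at which the pattern 1·0^s occurs in z is exactly the set of block start positions { Σ_{j<i} (s + 1 + (w_j).length) : 1 ≤ i ≤ N }. -/

import Mathlib

/-- The pattern `P` occurs in the binary string `z` at position `p`. -/
def occursAt (P z : List Bool) (p : ℕ) : Prop :=
  (z.drop p).take P.length = P

/-- The header pattern `1·0^s`: the symbol 1 followed by `s` copies of 0. -/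
def header (s : ℕ) : List Bool :=
  true :: List.replicate s false

lemma occ_iff (P z : List Bool) (p : ℕ) :
    occursAt P z p ↔ ∀ j < P.length, z[p + j]? = P[j]? := by
  unfold occursAt
  constructor
  · intro h j hj
    have := congrArg (fun l => l[j]?) h
    simpa [List.getElem?_take_of_lt hj, List.getElem?_drop] using this
  · intro h
    apply List.ext_getElem?
    intro j
    by_cases hj : j < P.length
    · rw [List.getElem?_take_of_lt hj, List.getElem?_drop, h j hj]
    · have h1 : P.length ≤ j := by omega
      rw [List.getElem?_eq_none (le_trans (List.length_take_le _ _) h1),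
        List.getElem?_eq_none h1]

lemma header_length (s : ℕ) : (header s).length = s + 1 := by simp [header]

lemma header_getElem? (s j : ℕ) (hj : j < s + 1) :
    (header s)[j]? = some (decide (j = 0)) := by
  cases j with
  | zero => simp [header]
  | succ n =>
    have hn : n < s := by omega
    simp [header, List.getElem?_replicate, hn]

lemma flatten_head (s : ℕ) (W : List (List Bool)) :
    ((W.map (fun w => header s ++ w)).flatten)[0]? ≠ some false := by
  cases W with
  | nil => simp
  | cons v V => simp [header]

lemma key (s : ℕ) (hs : 1 ≤ s) (W : List (List Bool))
    (hW : ∀ w ∈ W, ∀ p : ℕ, (w.drop p).take s ≠ List.replicate s false) (p : ℕ) :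
    occursAt (header s) ((W.map (fun w => header s ++ w)).flatten) p ↔
      ∃ i < W.length, p = ((W.take i).map (fun w => s + 1 + w.length)).sum := by
  induction W generalizing p with
  | nil => simp [occursAt, header]
  | cons w W' ih =>
    set z' := (W'.map (fun w => header s ++ w)).flatten with hz'
    have hzdef : (((w :: W').map (fun w => header s ++ w)).flatten)
        = (header s ++ w) ++ z' := by simp [hz']
    rw [hzdef]
    have hlen : (header s).length = s + 1 := header_length s
    have hw := hW w List.mem_cons_self
    have ihW := fun q => ih (fun v hv => hW v (List.mem_cons_of_mem _ hv)) (p := q)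
    set L := s + 1 + w.length with hL
    have hlen2 : (header s ++ w).length = L := by simp [hlen, hL]
    by_cases hp0 : p = 0
    · subst hp0
      apply iff_of_true
      · unfold occursAt
        rw [List.drop_zero, hlen, ← hlen, List.append_assoc, List.take_left]
      · exact ⟨0, by simp, by simp⟩
    by_cases hpL : L ≤ p
    · have hshift : ((header s ++ w) ++ z').drop p = z'.drop (p - L) := by
        have he : p = (header s ++ w).length + (p - L) := by rw [hlen2]; omega
        conv_lhs => rw [he]
        rw [List.drop_append]
        simp
      unfold occursAt
      rw [hshift, ← occursAt, ihW (p - L)]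
      constructor
      · rintro ⟨i, hi, hp⟩
        refine ⟨i + 1, by simpa using hi, ?_⟩
        simp only [List.take_succ_cons, List.map_cons, List.sum_cons]
        omega
      · rintro ⟨i, hi, hp⟩
        cases i with
        | zero => simp at hp; omega
        | succ i' =>
          refine ⟨i', by simpa using hi, ?_⟩
          simp only [List.take_succ_cons, List.map_cons, List.sum_cons] at hp
          omega
    · -- middle case: 1 ≤ p < L, show both sides false
      apply iff_of_false
      · intro hocc
        rw [occ_iff, hlen] at hocc
        by_cases hps : p ≤ s
        · have h0 := hocc 0 (by omega)
          rw [Nat.add_zero] at h0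
          rw [List.getElem?_append_left (by omega : p < (header s ++ w).length),
            List.getElem?_append_left (by omega : p < (header s).length),
            header_getElem? s p (by omega), header_getElem? s 0 (by omega)] at h0
          simp [hp0] at h0
        · -- s + 1 ≤ p < L, occurrence starts inside w
          push_neg at hps
          set q := p - (s + 1) with hq
          have hql : q < w.length := by omega
          have haux : ∀ j < s + 1, (w ++ z')[q + j]? = (header s)[j]? := by
            intro j hj
            have := hocc j hj
            rw [List.append_assoc] at this
            rw [List.getElem?_append_right (by rw [hlen]; omega)] at this
            rw [hlen] at this
            have he : p + j - (s + 1) = q + j := by omega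
            rwa [he] at this
          by_cases hcase : q + s < w.length
          · apply hw (q + 1)
            apply List.ext_getElem?
            intro n
            by_cases hn : n < s
            · rw [List.getElem?_take_of_lt hn, List.getElem?_drop]
              have h1 : (w ++ z')[q + (1 + n)]? = (header s)[1 + n]? :=
                haux (1 + n) (by omega)
              rw [List.getElem?_append_left (by omega : q + (1 + n) < w.length),
                header_getElem? s (1 + n) (by omega)] at h1
              have he : q + 1 + n = q + (1 + n) := by omega
              rw [he, h1]
              simp [List.getElem?_replicate, hn]
            · rw [List.getElem?_eq_none, List.getElem?_eq_none] <;> simp <;> omega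
          · -- zeros would spill into z'
            push_neg at hcase
            set j := w.length - q with hj
            have h1 := haux j (by omega)
            rw [List.getElem?_append_right (by omega : w.length ≤ q + j),
              header_getElem? s j (by omega)] at h1
            have he : q + j - w.length = 0 := by omega
            rw [he] at h1
            have hj0 : j ≠ 0 := by omega
            simp only [hj0, decide_eq_false_iff_not] at h1
            exact flatten_head s W' (by simpa using h1)
      · rintro ⟨i, hi, hp⟩
        cases i with
        | zero => simp at hp; omega
        | succ i' =>
          simp only [List.take_succ_cons, List.map_cons, List.sum_cons] at hp
          omega

/-- Parsing correctness: if each data block `w ∈ W` contains no run of `s`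
zeros, then in the concatenation of the blocks `(1·0^s) ++ wᵢ` the header
pattern `1·0^s` occurs exactly at the block start positions
`Σ_{j<i} (s + 1 + |w_j|)` for `i < |W|`. -/
theorem stmt_11 (s : ℕ) (hs : 1 ≤ s) (W : List (List Bool))
    (hW : ∀ w ∈ W, ∀ p : ℕ, (w.drop p).take s ≠ List.replicate s false) :
    {p : ℕ | occursAt (header s) ((W.map (fun w => header s ++ w)).flatten) p}
      = {p : ℕ | ∃ i < W.length,
          p = ((W.take i).map (fun w => s + 1 + w.length)).sum} := by
  ext p
  simp only [Set.mem_setOf_eq]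
  exact key s hs W hW p
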